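/- arXiv:math/0703757 — 11 statements merged into one kernel-verified Lean document; each statement's English description precedes it below -/
import Mathlib

section
/- A monomial ideal I in S = K[x_1,...,x_n] satisfies (I : x_j^∞) = (I : (x_1,...,x_j)^∞) for all j = 1,...,n if and only if for every monomial u ∈ I and all indices 1 ≤ j < i ≤ n with x_i dividing u, there exists an integer t > 0 such that x_j^t · u / x_i^{ν_i(u)} ∈ I, where ν_i(u) is the exponent of x_i in u. -/
/-! Monomials in `S = K[x_1,…,x_n]` are identified with their exponent vectors in
`Fin n →₀ ℕ` (0-indexed: the variable `x_j` of the paper is index `j-1`).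
A monomial ideal is identified with its set `M` of exponent vectors of monomials. -/

/-- `M` is the set of exponent vectors of the monomials of a monomial ideal:
it is closed under multiplication by arbitrary monomials. -/
def MonIdeal {n : ℕ} (M : Set (Fin n →₀ ℕ)) : Prop :=
  ∀ u ∈ M, ∀ v : Fin n →₀ ℕ, u + v ∈ M

/-- The Borel type condition: for every monomial `u ∈ I` and `j < i` with `x_i ∣ u`
there is `t > 0` with `x_j^t · u / x_i^{ν_i(u)} ∈ I`. -/
def BorelProp {n : ℕ} (M : Set (Fin n →₀ ℕ)) : Prop :=
  ∀ u ∈ M, ∀ i j : Fin n, j < i → u i ≠ 0 →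
    ∃ t : ℕ, 0 < t ∧ Finsupp.single j t + Finsupp.update u i 0 ∈ M

/-- `i = m(u)`, the largest index of a variable dividing the monomial `u`. -/
def IsMaxVar {n : ℕ} (u : Fin n →₀ ℕ) (i : Fin n) : Prop :=
  u i ≠ 0 ∧ ∀ k : Fin n, i < k → u k = 0

/-- `M` is stable: for every monomial `u ∈ M` and `j < m(u)`, `x_j · u / x_{m(u)} ∈ M`. -/
def StableProp {n : ℕ} (M : Set (Fin n →₀ ℕ)) : Prop :=
  ∀ u ∈ M, ∀ i : Fin n, IsMaxVar u i → ∀ j : Fin n, j < i →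
    Finsupp.single j 1 + Finsupp.update u i (u i - 1) ∈ M

/-- degree of a monomial. -/
def mdeg {n : ℕ} (u : Fin n →₀ ℕ) : ℕ := ∑ k : Fin n, u k

/-- `u` is a minimal monomial generator of `M` (divisibility of monomials is `≤`
of exponent vectors). -/
def MinGen {n : ℕ} (M : Set (Fin n →₀ ℕ)) (u : Fin n →₀ ℕ) : Prop :=
  u ∈ M ∧ ∀ v ∈ M, v ≤ u → v = u

/-- `deg(I)`: the maximal degree of a minimal monomial generator. -/
noncomputable def idealDeg {n : ℕ} (M : Set (Fin n →₀ ℕ)) : ℕ :=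
  sSup {d | ∃ u, MinGen M u ∧ mdeg u = d}

/-- `I_{≥ e}`: the ideal generated by all monomials of `I` of degree `≥ e`. -/
def geSet {n : ℕ} (M : Set (Fin n →₀ ℕ)) (e : ℕ) : Set (Fin n →₀ ℕ) :=
  {w | ∃ u ∈ M, e ≤ mdeg u ∧ u ≤ w}

/-- the product of two monomial ideals (on the level of monomials). -/
def prodSet {n : ℕ} (M N : Set (Fin n →₀ ℕ)) : Set (Fin n →₀ ℕ) :=
  {w | ∃ u ∈ M, ∃ v ∈ N, w = u + v}

/-- The Castelnuovo–Mumford regularity of a monomial ideal of Borel type: by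
[Cimpoeas, Cor. 8] / Theorem 1.5, `reg(I) = min { e ≥ deg I : I_{≥e} is stable }`. -/
noncomputable def regSet {n : ℕ} (M : Set (Fin n →₀ ℕ)) : ℕ :=
  sInf {e | idealDeg M ≤ e ∧ StableProp (geSet M e)}

/-- `q` (0-indexed) is the largest index with `x_q ∈ √I`. -/
def IsQ {n : ℕ} (M : Set (Fin n →₀ ℕ)) (q : Fin n) : Prop :=
  (∃ k : ℕ, 0 < k ∧ Finsupp.single q k ∈ M) ∧
    ∀ j : Fin n, (∃ k : ℕ, 0 < k ∧ Finsupp.single j k ∈ M) → j ≤ q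

/-! Write `𝔪ⱼ = (x₁, …, xⱼ)`. Since `𝔪ⱼ` is finitely generated, `g ∈ (I : 𝔪ⱼ^∞)` iff every
generator `xᵢ`, `i ≤ j`, has a power with `xᵢ^t g ∈ I` (some power of `𝔪ⱼ` lies in any ideal whose
radical contains `𝔪ⱼ`). For a monomial ideal, `xᵢ^t g ∈ I` can be tested on each monomial `w` of
`g` separately, and the Borel condition applied to `xⱼ^k w ∈ I` trades the power of `xⱼ` for a
power of `xᵢ`. Conversely, for `u ∈ I` the monomial `u / xᵢ^{νᵢ(u)}` lies in
`(I : xᵢ^∞) = (I : 𝔪ᵢ^∞)`, so a power of `xⱼ`, `j < i`, multiplies it into `I`. -/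

theorem Ideal.exists_pow_forall_mul_mem_iff {R : Type*} [CommSemiring R] {I : Ideal R}
    {S : Set R} (hS : S.Finite) {g : R} :
    (∃ k : ℕ, ∀ h ∈ Ideal.span S ^ k, h * g ∈ I) ↔ ∀ s ∈ S, ∃ k : ℕ, s ^ k * g ∈ I := by
  have mem_colon (h : R) : h ∈ I.colon {g} ↔ h * g ∈ I := by
    rw [Submodule.mem_colon_singleton, smul_eq_mul]
  constructor
  · rintro ⟨k, hk⟩ s hs
    exact ⟨k, hk _ (Ideal.pow_mem_pow (Ideal.subset_span hs) k)⟩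
  · intro h
    have hFG : (Ideal.span S).FG := ⟨hS.toFinset, by simp⟩
    obtain ⟨k, hk⟩ := Ideal.exists_pow_le_of_le_radical_of_fg
      (Ideal.span_le.2 fun s hs => (h s hs).imp fun k => (mem_colon _).2) hFG
    exact ⟨k, fun h hh => (mem_colon h).1 (hk hh)⟩

namespace MvPolynomial

variable {σ R : Type*} [CommSemiring R]

theorem support_monomial_one_mul (b : σ →₀ ℕ) (g : MvPolynomial σ R) :
    (monomial b (1 : R) * g).support = g.support.map (addLeftEmbedding b) :=
  AddMonoidAlgebra.support_coeff_single_mul g 1 (by simp) b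

theorem exists_monomial_single_add_mem_of_borel [LT σ] {I : Ideal (MvPolynomial σ R)}
    (hB : ∀ u : σ →₀ ℕ, monomial u (1 : R) ∈ I → ∀ i j : σ, j < i → u i ≠ 0 →
      ∃ t : ℕ, 0 < t ∧ monomial (Finsupp.single j t + Finsupp.update u i 0) (1 : R) ∈ I)
    {i j : σ} (hij : i < j) {k : ℕ} {w : σ →₀ ℕ}
    (hw : monomial (Finsupp.single j k + w) (1 : R) ∈ I) :
    ∃ t : ℕ, monomial (Finsupp.single i t + w) (1 : R) ∈ I := by
  classical
  rcases k.eq_zero_or_pos with rfl | hk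
  · exact ⟨0, by simpa using hw⟩
  have hj : (Finsupp.single j k + w) j ≠ 0 := by
    simp only [Finsupp.add_apply, Finsupp.single_eq_same]; omega
  obtain ⟨t, -, ht⟩ := hB _ hw j i hij hj
  have hle : Finsupp.update (Finsupp.single j k + w) j 0 ≤ w := by
    intro l
    rcases eq_or_ne l j with rfl | hne
    · simp
    · simp [Finsupp.update_apply, hne]
  refine ⟨t, I.mem_of_dvd ?_ ht⟩
  exact monomial_dvd_monomial.2 ⟨Or.inr (add_le_add_right hle _), dvd_rfl⟩

variable [Nontrivial R] {M : Set (σ →₀ ℕ)}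

theorem monomial_one_mem_span_monomial_image_iff {w : σ →₀ ℕ} :
    monomial w (1 : R) ∈ Ideal.span ((fun s => monomial s (1 : R)) '' M) ↔
      ∃ s ∈ M, s ≤ w := by
  classical
  rw [mem_ideal_span_monomial_image, support_monomial, if_neg one_ne_zero]
  simp

theorem monomial_one_mul_mem_span_monomial_image_iff {b : σ →₀ ℕ} {g : MvPolynomial σ R} :
    monomial b (1 : R) * g ∈ Ideal.span ((fun s => monomial s (1 : R)) '' M) ↔
      ∀ w ∈ g.support,
        monomial (b + w) (1 : R) ∈ Ideal.span ((fun s => monomial s (1 : R)) '' M) := by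
  simp_rw [monomial_one_mem_span_monomial_image_iff]
  rw [mem_ideal_span_monomial_image, support_monomial_one_mul, Finset.forall_mem_map]
  rfl

theorem exists_X_pow_mul_mem_span_monomial_image {i : σ} {g : MvPolynomial σ R}
    (h : ∀ w ∈ g.support, ∃ t : ℕ, monomial (Finsupp.single i t + w) (1 : R) ∈
      Ideal.span ((fun s => monomial s (1 : R)) '' M)) :
    ∃ t : ℕ, X i ^ t * g ∈ Ideal.span ((fun s => monomial s (1 : R)) '' M) := by
  simp_rw [X_pow_eq_monomial, monomial_one_mul_mem_span_monomial_image_iff]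
  refine ((Filter.eventually_all_finset (l := Filter.atTop) _).2 fun w hw => ?_).exists
  obtain ⟨t, ht⟩ := h w hw
  refine Filter.eventually_atTop.2 ⟨t, fun t' htt' => Ideal.mem_of_dvd _ ?_ ht⟩
  exact monomial_dvd_monomial.2 ⟨Or.inr (by gcongr), dvd_rfl⟩

end MvPolynomial

open MvPolynomial in
theorem statement0_general {K : Type*} [Field K] {n : ℕ}
    (I : Ideal (MvPolynomial (Fin n) K))
    (hI : ∃ M : Set (Fin n →₀ ℕ),
      I = Ideal.span ((fun u => monomial u (1 : K)) '' M)) :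
    (∀ j : Fin n,
        {g | ∃ k : ℕ, (X j : MvPolynomial (Fin n) K) ^ k * g ∈ I} =
        {g | ∃ k : ℕ, ∀ h ∈ (Ideal.span {p | ∃ i : Fin n, i ≤ j ∧ p = (X i : MvPolynomial (Fin n) K)}) ^ k,
              h * g ∈ I}) ↔
    (∀ u : Fin n →₀ ℕ, monomial u (1 : K) ∈ I → ∀ i j : Fin n, j < i → u i ≠ 0 →
        ∃ t : ℕ, 0 < t ∧
          monomial (Finsupp.single j t + Finsupp.update u i 0) (1 : K) ∈ I) := by
  obtain ⟨M, rfl⟩ := hI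
  have hsat (j : Fin n) (g : MvPolynomial (Fin n) K) :
      (∃ k : ℕ, ∀ h ∈ Ideal.span {p | ∃ i : Fin n, i ≤ j ∧ p = X i} ^ k,
        h * g ∈ Ideal.span ((fun u => monomial u (1 : K)) '' M)) ↔
      ∀ i ≤ j, ∃ k : ℕ, X i ^ k * g ∈ Ideal.span ((fun u => monomial u (1 : K)) '' M) := by
    rw [Ideal.exists_pow_forall_mul_mem_iff
      ((Set.finite_range X).subset (by rintro _ ⟨i, -, rfl⟩; exact ⟨i, rfl⟩))]
    exact ⟨fun h i hi => h _ ⟨i, hi, rfl⟩, by rintro h _ ⟨i, hi, rfl⟩; exact h i hi⟩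
  simp only [Set.ext_iff, Set.mem_ofPred_eq, hsat]
  constructor
  · intro h u hu i j hji _
    have hsplit : X i ^ u i * monomial (Finsupp.update u i 0) (1 : K) = monomial u 1 := by
      rw [X_pow_eq_monomial, monomial_mul, one_mul, ← Finsupp.erase_eq_update_zero,
        Finsupp.single_add_erase]
    obtain ⟨t, ht⟩ := (h i _).1 ⟨u i, hsplit ▸ hu⟩ j hji.le
    have hmul : monomial (Finsupp.single j (t + 1) + Finsupp.update u i 0) (1 : K) =
        X j * (X j ^ t * monomial (Finsupp.update u i 0) 1) := by
      rw [← mul_assoc, ← pow_succ', X_pow_eq_monomial, monomial_mul, one_mul]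
    exact ⟨t + 1, t.succ_pos, hmul ▸ Ideal.mul_mem_left _ _ ht⟩
  · refine fun hB j g => ⟨fun ⟨k, hk⟩ i hij => ?_, fun h => h j le_rfl⟩
    rcases hij.lt_or_eq with hlt | rfl
    · rw [X_pow_eq_monomial, monomial_one_mul_mem_span_monomial_image_iff] at hk
      exact exists_X_pow_mul_mem_span_monomial_image fun w hw =>
        exists_monomial_single_add_mem_of_borel hB hlt (hk w hw)
    · exact ⟨k, hk⟩

open MvPolynomial in
/-- a monomial ideal `I` satisfies `(I : x_j^∞) = (I : (x_1,…,x_j)^∞)`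
for all `j` iff for every monomial `u ∈ I` and `j < i` with `x_i ∣ u` there is `t > 0`
with `x_j^t u / x_i^{ν_i(u)} ∈ I`. -/
theorem statement0 {K : Type*} [Field K] {n : ℕ} (hn : 2 ≤ n)
    (I : Ideal (MvPolynomial (Fin n) K))
    (hI : ∃ M : Set (Fin n →₀ ℕ),
      I = Ideal.span ((fun u => monomial u (1 : K)) '' M)) :
    (∀ j : Fin n,
        {g | ∃ k : ℕ, (X j : MvPolynomial (Fin n) K) ^ k * g ∈ I} =
        {g | ∃ k : ℕ, ∀ h ∈ (Ideal.span {p | ∃ i : Fin n, i ≤ j ∧ p = (X i : MvPolynomial (Fin n) K)}) ^ k,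
              h * g ∈ I}) ↔
    (∀ u : Fin n →₀ ℕ, monomial u (1 : K) ∈ I → ∀ i j : Fin n, j < i → u i ≠ 0 →
        ∃ t : ℕ, 0 < t ∧
          monomial (Finsupp.single j t + Finsupp.update u i 0) (1 : K) ∈ I) :=
  statement0_general I hI
end

section
/- If I and J are monomial ideals of Borel type in S = K[x_1,...,x_n], then I ∩ J is an ideal of Borel type. -/
/-- the intersection of two Borel type ideals is of Borel type. -/
theorem statement2 {n : ℕ} (M N : Set (Fin n →₀ ℕ))
    (hM : MonIdeal M) (hN : MonIdeal N) (hBM : BorelProp M) (hBN : BorelProp N) :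
    BorelProp (M ∩ N) := by
  rintro u ⟨huM, huN⟩ i j hji hui
  obtain ⟨t1, ht1, h1⟩ := hBM u huM i j hji hui
  obtain ⟨t2, ht2, h2⟩ := hBN u huN i j hji hui
  refine ⟨max t1 t2, lt_of_lt_of_le ht1 (le_max_left _ _), ?_, ?_⟩
  · have := hM _ h1 (Finsupp.single j (max t1 t2 - t1))
    have e : Finsupp.single j t1 + Finsupp.update u i 0
        + Finsupp.single j (max t1 t2 - t1)
        = Finsupp.single j (max t1 t2) + Finsupp.update u i 0 := by
      rw [add_right_comm, ← Finsupp.single_add,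
        Nat.add_sub_cancel' (le_max_left _ _)]
    rwa [e] at this
  · have := hN _ h2 (Finsupp.single j (max t1 t2 - t2))
    have e : Finsupp.single j t2 + Finsupp.update u i 0
        + Finsupp.single j (max t1 t2 - t2)
        = Finsupp.single j (max t1 t2) + Finsupp.update u i 0 := by
      rw [add_right_comm, ← Finsupp.single_add,
        Nat.add_sub_cancel' (le_max_right _ _)]
    rwa [e] at this
end

section
/- If I and J are monomial ideals of Borel type in S = K[x_1,...,x_n], then the product I · J is an ideal of Borel type. -/
lemma update_add_zero {n : ℕ} (f g : Fin n →₀ ℕ) (i : Fin n) :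
    Finsupp.update (f + g) i 0 = Finsupp.update f i 0 + Finsupp.update g i 0 := by
  ext k
  by_cases h : k = i <;> simp [Finsupp.update, Function.update, h]

lemma update_eq_self_of_zero {n : ℕ} (f : Fin n →₀ ℕ) (i : Fin n) (h : f i = 0) :
    Finsupp.update f i 0 = f := by
  rw [← h]; exact Finsupp.update_self f i

/-- the product of two Borel type ideals is of Borel type. -/
theorem statement3 {n : ℕ} (M N : Set (Fin n →₀ ℕ))
    (hM : MonIdeal M) (hN : MonIdeal N) (hBM : BorelProp M) (hBN : BorelProp N) :
    BorelProp (prodSet M N) := by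
  rintro w ⟨u, hu, v, hv, rfl⟩ i j hji hwi
  rw [Finsupp.add_apply] at hwi
  by_cases hui : u i = 0
  · have hvi : v i ≠ 0 := by omega
    obtain ⟨t, ht, hb⟩ := hBN v hv i j hji hvi
    refine ⟨t, ht, u, hu, _, hb, ?_⟩
    rw [update_add_zero, update_eq_self_of_zero u i hui]
    abel
  · by_cases hvi : v i = 0
    · obtain ⟨t, ht, hb⟩ := hBM u hu i j hji hui
      refine ⟨t, ht, _, hb, v, hv, ?_⟩
      rw [update_add_zero, update_eq_self_of_zero v i hvi]
      abel
    · obtain ⟨t₁, ht₁, hb₁⟩ := hBM u hu i j hji hui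
      obtain ⟨t₂, ht₂, hb₂⟩ := hBN v hv i j hji hvi
      refine ⟨t₁ + t₂, by omega, _, hb₁, _, hb₂, ?_⟩
      rw [update_add_zero, Finsupp.single_add]
      abel
end

section
/- If I ⊂ S is a monomial ideal of Borel type and v is any monomial in S, then the colon ideal (I : v) is an ideal of Borel type. -/
/-- the colon of a Borel type ideal by a monomial is of Borel type. -/
theorem statement4 {n : ℕ} (M : Set (Fin n →₀ ℕ))
    (hM : MonIdeal M) (hBM : BorelProp M) (v : Fin n →₀ ℕ) :
    BorelProp {u : Fin n →₀ ℕ | u + v ∈ M} := by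
  intro u hu i j hji hui
  obtain ⟨t, ht, htM⟩ := hBM (u + v) hu i j hji (by
    simp only [Finsupp.add_apply]; omega)
  refine ⟨t, ht, ?_⟩
  have key : Finsupp.single j t + Finsupp.update u i 0 + v =
      (Finsupp.single j t + Finsupp.update (u + v) i 0) + Finsupp.single i (v i) := by
    ext k
    by_cases hk : k = i
    · subst hk
      simp [Finsupp.update, Finsupp.single_apply]
    · simp only [Finsupp.add_apply, Finsupp.coe_update, Function.update_apply, Finsupp.single_apply, if_neg hk, Finsupp.coe_add, Pi.add_apply, if_neg (Ne.symm hk)]; omega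
  show Finsupp.single j t + Finsupp.update u i 0 + v ∈ M
  rw [key]
  exact hM _ htM _
end

section
/- If I ⊂ S is a monomial ideal of Borel type and J ⊂ S is any monomial ideal, then the colon ideal (I : J) is an ideal of Borel type. -/
/-! Fix `u ∈ (I : J)` and `j < i` with `x_i ∣ u`, and let `c = u / x_i^{ν_i(u)}`.
For each `v ∈ J` the Borel property of `I` at `u v ∈ I` yields some `t` with `x_j^t c v ∈ I`,
and the monomials `v` that work for a given `t` form a monomial ideal, growing with `t`.
By Dickson's lemma `J` has only finitely many minimal monomials, so a single `t`
serves all of them, hence all of `J`. -/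

/-- The finitely many minimal elements of `s` lie in a common `A i`. -/
theorem WellQuasiOrderedLE.exists_subset_of_subset_iUnion {α ι : Type*} [PartialOrder α]
    [WellQuasiOrderedLE α] [Nonempty ι] {A : ι → Set α} (hdir : Directed (· ⊆ ·) A)
    (hup : ∀ i, IsUpperSet (A i)) {s : Set α} (hs : s ⊆ ⋃ i, A i) : ∃ i, s ⊆ A i := by
  have hmin : {m | Minimal (· ∈ s) m}.Finite :=
    WellQuasiOrderedLE.finite_of_isAntichain (setOfPred_minimal_antichain _)
  obtain ⟨i, hi⟩ := hdir.exists_mem_subset_of_finset_subset_biUnion (s := hmin.toFinset)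
    fun m hm => hs (hmin.mem_toFinset.1 hm).prop
  refine ⟨i, fun v hv => ?_⟩
  obtain ⟨m, hmv, hm⟩ := (Set.isPWO_of_wellQuasiOrderedLE s).exists_le_minimal hv
  exact hup i hmv (hi (hmin.mem_toFinset.2 hm))

theorem MonIdeal.isUpperSet {n : ℕ} {M : Set (Fin n →₀ ℕ)} (hM : MonIdeal M) : IsUpperSet M :=
  fun u w huw hu => add_tsub_cancel_of_le huw ▸ hM u hu (w - u)

theorem BorelProp.exists_add_mem_of_add_mem {n : ℕ} {M : Set (Fin n →₀ ℕ)} (hM : MonIdeal M)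
    (hBM : BorelProp M) {u v : Fin n →₀ ℕ} (huv : u + v ∈ M) {i j : Fin n} (hji : j < i)
    (hui : u i ≠ 0) : ∃ t, Finsupp.single j t + Finsupp.update u i 0 + v ∈ M := by
  obtain ⟨t, -, ht⟩ := hBM _ huv i j hji (by simp only [Finsupp.add_apply]; omega)
  refine ⟨t, hM.isUpperSet ?_ ht⟩
  rw [add_assoc]
  gcongr
  refine Finsupp.le_def.2 fun k => ?_
  by_cases hk : k = i
  · simp [hk]
  · simp [Finsupp.update_apply, hk]

theorem statement5_general {n : ℕ} (M N : Set (Fin n →₀ ℕ))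
    (hM : MonIdeal M) (hBM : BorelProp M) :
    BorelProp {u : Fin n →₀ ℕ | ∀ v ∈ N, u + v ∈ M} := by
  intro u hu i j hji hui
  set A : ℕ → Set (Fin n →₀ ℕ) := fun t => {v | Finsupp.single j t + Finsupp.update u i 0 + v ∈ M}
  have hup : ∀ t, IsUpperSet (A t) := fun t v w hvw hv => hM.isUpperSet (by gcongr) hv
  have hmono : Monotone A := fun t t' htt' v hv => hM.isUpperSet (by gcongr) hv
  have hcover : N ⊆ ⋃ t, A t := fun v hv =>
    Set.mem_iUnion.2 (hBM.exists_add_mem_of_add_mem hM (hu v hv) hji hui)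
  obtain ⟨t, ht⟩ :=
    WellQuasiOrderedLE.exists_subset_of_subset_iUnion hmono.directed_le hup hcover
  exact ⟨t + 1, t.succ_pos, fun v hv => hmono t.le_succ (ht hv)⟩

/-- the colon of a Borel type ideal by an arbitrary monomial ideal is
of Borel type. -/
theorem statement5 {n : ℕ} (M N : Set (Fin n →₀ ℕ))
    (hM : MonIdeal M) (hBM : BorelProp M) (hN : MonIdeal N) :
    BorelProp {u : Fin n →₀ ℕ | ∀ v ∈ N, u + v ∈ M} :=
  statement5_general M N hM hBM
end

section
/- A monomial ideal I ⊂ S is of Borel type if and only if for every monomial u ∈ I and every integer 1 ≤ j < m(u), there exists an integer t > 0 such that x_j^t · u / x_{m(u)}^{ν_{m(u)}(u)} ∈ I, where m(u) = max{i : x_i | u}. -/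
lemma fupd_apply {n : ℕ} (u : Fin n →₀ ℕ) (i k : Fin n) (b : ℕ) :
    Finsupp.update u i b k = if k = i then b else u k := by
  rcases eq_or_ne k i with h | h
  · subst h; simp
  · simp [Finsupp.coe_update, Function.update, h]

/-- a monomial ideal is of Borel type iff the Borel condition holds
with `i = m(u)`, the largest variable dividing `u`. -/
theorem statement7 {n : ℕ} (M : Set (Fin n →₀ ℕ)) (hM : MonIdeal M) :
    BorelProp M ↔
      ∀ u ∈ M, ∀ i : Fin n, IsMaxVar u i → ∀ j : Fin n, j < i →
        ∃ t : ℕ, 0 < t ∧ Finsupp.single j t + Finsupp.update u i 0 ∈ M := by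
  constructor
  · intro hB u hu i hi j hj
    exact hB u hu i j hj hi.1
  · intro h
    have key : ∀ N : ℕ, ∀ u ∈ M, ∀ i j : Fin n, j < i → u i ≠ 0 →
        (∀ k : Fin n, u k ≠ 0 → k.val ≤ N) →
        ∃ t : ℕ, 0 < t ∧ Finsupp.single j t + Finsupp.update u i 0 ∈ M := by
      intro N
      induction N using Nat.strong_induction_on with
      | _ N IH =>
        intro u hu i j hj hi hbd
        have hine : i ∈ u.support := Finsupp.mem_support_iff.mpr hi
        set m := u.support.max' ⟨i, hine⟩ with hm
        have hmmem : m ∈ u.support := u.support.max'_mem ⟨i, hine⟩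
        have hmne : u m ≠ 0 := Finsupp.mem_support_iff.mp hmmem
        have him : i ≤ m := Finset.le_max' _ i hine
        have hmax : IsMaxVar u m := by
          refine ⟨hmne, fun k hk => ?_⟩
          by_contra hk0
          exact absurd (Finset.le_max' _ k (Finsupp.mem_support_iff.mpr hk0))
            (not_le.mpr hk)
        rcases eq_or_lt_of_le him with heq | hlt
        · exact h u hu i (heq ▸ hmax) j hj
        · obtain ⟨t, ht, hmem⟩ := h u hu m hmax i hlt
          set u₁ := Finsupp.single i t + Finsupp.update u m 0 with hu₁
          have hu₁i : u₁ i = t + u i := by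
            simp [hu₁, Finsupp.single_apply, fupd_apply, (ne_of_lt hlt)]
          have hmpos : 0 < m.val := lt_of_le_of_lt (Nat.zero_le _) hlt
          have hmN : m.val ≤ N := hbd m hmne
          obtain ⟨t', ht', hmem'⟩ := IH (m.val - 1) (by omega) u₁ hmem i j hj
            (by rw [hu₁i]; omega)
            (by
              intro k hk
              have hkm : k ≠ m := by
                intro hkm
                apply hk
                simp [hu₁, hkm, Finsupp.single_apply, fupd_apply,
                  (ne_of_lt hlt).symm, (ne_of_lt hlt)]
              by_cases hki : k = i
              · subst hki; omega
              · have huk : u₁ k = u k := by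
                  simp [hu₁, Finsupp.single_apply, fupd_apply, Ne.symm hki, hkm]
                rw [huk] at hk
                have h1 : k ≤ m := Finset.le_max' _ k (Finsupp.mem_support_iff.mpr hk)
                have h2 : k < m := lt_of_le_of_ne h1 hkm
                omega)
          refine ⟨t', ht', ?_⟩
          have hfinal := hM _ hmem' (Finsupp.single m (u m))
          have heq2 : Finsupp.single j t' + Finsupp.update u₁ i 0 +
              Finsupp.single m (u m) = Finsupp.single j t' + Finsupp.update u i 0 := by
            ext k
            simp only [Finsupp.add_apply, Finsupp.single_apply, fupd_apply, hu₁]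
            have hjm : j ≠ m := ne_of_lt (lt_trans hj hlt)
            have him' : i ≠ m := ne_of_lt hlt
            by_cases hki : k = i
            · subst hki; simp [him', Ne.symm him']
            · by_cases hkm : k = m
              · subst hkm; simp [Ne.symm him', hki, him']
              · simp [hki, hkm, Ne.symm hkm, Ne.symm hki]
          rwa [heq2] at hfinal
    intro u hu i j hj hi
    exact key n u hu i j hj hi (fun k _ => le_of_lt k.isLt)
end

section
/- Let I ⊂ S be a monomial ideal such that I_{≥ e} is stable for some integer e ≥ deg(I), where deg(I) is the maximal degree of a minimal monomial generator of I. Then I is an ideal of Borel type. -/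
/-! Multiply `u` by `x_i^e` to land in `I_{≥e}`, then use stability to push, one unit at a time,
the whole exponent carried by the variables after `x_j` onto `x_j`. The monomial reached lies in
`I_{≥e} ⊆ I` and divides `x_j^t · u / x_i^{ν_i(u)}`, where `t > 0` is the exponent moved. -/

open Finset

section Monomials

variable {n : ℕ}

theorem MonIdeal.mem_of_le {M : Set (Fin n →₀ ℕ)} (hM : MonIdeal M) {u w : Fin n →₀ ℕ}
    (hu : u ∈ M) (huw : u ≤ w) : w ∈ M := by
  obtain ⟨c, rfl⟩ := le_iff_exists_add.mp huw
  exact hM u hu c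

theorem MonIdeal.geSet_subset {M : Set (Fin n →₀ ℕ)} (hM : MonIdeal M) (e : ℕ) :
    geSet M e ⊆ M := by
  rintro w ⟨u, hu, -, huw⟩
  exact hM.mem_of_le hu huw

theorem exists_isMaxVar {u : Fin n →₀ ℕ} {k : Fin n} (hk : u k ≠ 0) :
    ∃ m, k ≤ m ∧ IsMaxVar u m := by
  have hne : u.support.Nonempty := ⟨k, Finsupp.mem_support_iff.mpr hk⟩
  refine ⟨u.support.max' hne, u.support.le_max' k (Finsupp.mem_support_iff.mpr hk),
    Finsupp.mem_support_iff.mp (u.support.max'_mem hne), fun l hl => ?_⟩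
  by_contra h
  exact (u.support.le_max' l (Finsupp.mem_support_iff.mpr h)).not_gt hl

theorem filter_le_single_add_update {u : Fin n →₀ ℕ} {j m : Fin n} (hjm : j < m) :
    (Finsupp.single j 1 + Finsupp.update u m (u m - 1)).filter (· ≤ j) =
      Finsupp.single j 1 + u.filter (· ≤ j) := by
  ext k
  by_cases hkj : k ≤ j
  · have hkm : k ≠ m := (hkj.trans_lt hjm).ne
    simp [hkj, hkm]
  · have hjk : j ≠ k := fun h => hkj h.ge
    simp [hkj, hjk]

theorem sum_Ioi_single_add_update {u : Fin n →₀ ℕ} {j m : Fin n} (hjm : j < m)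
    (hum : u m ≠ 0) :
    ∑ k ∈ Ioi j, (Finsupp.single j 1 + Finsupp.update u m (u m - 1) : Fin n →₀ ℕ) k + 1 =
      ∑ k ∈ Ioi j, u k := by
  have hm : m ∈ Ioi j := mem_Ioi.mpr hjm
  have hsingle : ∀ k ∈ Ioi j,
      (Finsupp.single j 1 + Finsupp.update u m (u m - 1) : Fin n →₀ ℕ) k =
        Function.update u m (u m - 1) k := fun k hk => by
    simp [(mem_Ioi.mp hk).ne]
  rw [sum_congr rfl hsingle, sum_update_of_mem hm, ← add_sum_erase _ u hm,
    sdiff_singleton_eq_erase]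
  omega

theorem StableProp.single_add_filter_mem {M : Set (Fin n →₀ ℕ)} (hst : StableProp M)
    (j : Fin n) {u : Fin n →₀ ℕ} (hu : u ∈ M) :
    Finsupp.single j (∑ k ∈ Ioi j, u k) + u.filter (· ≤ j) ∈ M := by
  generalize hs : ∑ k ∈ Ioi j, u k = s
  induction s generalizing u with
  | zero =>
    have htail : ∀ k, u k ≠ 0 → k ≤ j := fun k hk => not_lt.mp fun hjk =>
      hk (sum_eq_zero_iff.mp hs k (mem_Ioi.mpr hjk))
    rwa [Finsupp.single_zero, zero_add, (Finsupp.filter_eq_self_iff _ u).mpr htail]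
  | succ s ih =>
    obtain ⟨k, hk, hku⟩ := exists_ne_zero_of_sum_ne_zero (hs.trans_ne s.succ_ne_zero)
    obtain ⟨m, hkm, hmax⟩ := exists_isMaxVar hku
    have hjm : j < m := (mem_Ioi.mp hk).trans_le hkm
    have hv := ih (hst u hu m hmax j hjm)
      (by have := sum_Ioi_single_add_update (u := u) hjm hmax.1; omega)
    rwa [filter_le_single_add_update hjm, ← add_assoc, ← Finsupp.single_add] at hv

end Monomials

theorem statement8_general {n : ℕ} (M : Set (Fin n →₀ ℕ)) (hM : MonIdeal M)
    (e : ℕ) (hst : StableProp (geSet M e)) :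
    BorelProp M := by
  intro u hu i j hji hui
  set w := u + Finsupp.single i e
  have hwi : u i ≤ w i := by simp [w]
  have hw : w ∈ geSet M e := by
    refine ⟨w, hM u hu _, ?_, le_rfl⟩
    calc e ≤ w i := by simp [w]
      _ ≤ mdeg w := single_le_sum (fun k _ => Nat.zero_le (w k)) (mem_univ i)
  have hmoved : w i ≤ ∑ k ∈ Ioi j, w k :=
    single_le_sum (fun k _ => Nat.zero_le (w k)) (mem_Ioi.mpr hji)
  refine ⟨∑ k ∈ Ioi j, w k, by omega,
    hM.mem_of_le (hM.geSet_subset e (hst.single_add_filter_mem j hw)) ?_⟩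
  refine add_le_add_right (fun k => ?_) _
  by_cases hkj : k ≤ j
  · have hki : k ≠ i := (hkj.trans_lt hji).ne
    simp [hkj, hki, w]
  · simp [hkj]

/-- if `I_{≥e}` is stable for some `e ≥ deg I`, then `I` is of Borel type. -/
theorem statement8 {n : ℕ} (M : Set (Fin n →₀ ℕ)) (hM : MonIdeal M)
    (e : ℕ) (he : idealDeg M ≤ e) (hst : StableProp (geSet M e)) :
    BorelProp M :=
  statement8_general M hM e hst
end

section
/- Let I, J ⊂ S be monomial ideals and e ≥ deg(I), f ≥ deg(J) integers such that I_{≥ e} and J_{≥ f} are stable. Then (I · J)_{≥ e+f} is stable. -/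
/-! For `e ≥ deg I` and `f ≥ deg J` one has `(I·J)_{≥e+f} = I_{≥e} · J_{≥f}`: a monomial of `I·J`
of degree `≥ e+f` is divisible by `g·h` with `g`, `h` minimal generators of degrees `≤ e`, `≤ f`,
and the cofactor can be split so as to raise `g` to degree exactly `e`, leaving degree `≥ f` for the
rest. A product of stable ideals is stable: if `m(u·v) = i` then `x_i` divides `u` or `v`, and
that factor again has `m = i`, so the exchange `x_i ↦ x_j` can be carried out inside it. -/

section MonomialIdeals

variable {n : ℕ}

lemma mdeg_eq_degree (u : Fin n →₀ ℕ) : mdeg u = u.degree :=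
  (Finsupp.degree_eq_sum u).symm

lemma mdeg_add (a b : Fin n →₀ ℕ) : mdeg (a + b) = mdeg a + mdeg b := by
  simp only [mdeg_eq_degree, map_add]

lemma mdeg_mono {a b : Fin n →₀ ℕ} (h : a ≤ b) : mdeg a ≤ mdeg b :=
  Finset.sum_le_sum fun k _ => h k

lemma exists_add_eq_of_le_mdeg {d : ℕ} {r : Fin n →₀ ℕ} (h : d ≤ mdeg r) :
    ∃ s t, r = s + t ∧ mdeg s = d := by
  induction d with
  | zero => exact ⟨0, r, (zero_add r).symm, by simp [mdeg]⟩
  | succ d ih =>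
    obtain ⟨s, t, rfl, hs⟩ := ih (by omega)
    obtain ⟨i, hi⟩ : ∃ i, t i ≠ 0 := by
      by_contra! ht
      obtain rfl : t = 0 := Finsupp.ext ht
      rw [add_zero] at h
      omega
    obtain ⟨t', rfl⟩ := exists_add_of_le (Finsupp.single_le_iff.2 (Nat.one_le_iff_ne_zero.2 hi))
    refine ⟨s + Finsupp.single i 1, t', (add_assoc _ _ _).symm, ?_⟩
    rw [mdeg_add, hs, mdeg_eq_degree, Finsupp.degree_single]

lemma exists_minGen_le {M : Set (Fin n →₀ ℕ)} {u : Fin n →₀ ℕ} (hu : u ∈ M) :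
    ∃ g, MinGen M g ∧ g ≤ u := by
  obtain ⟨g, ⟨hgM, hgu⟩, hmin⟩ := wellFounded_lt.has_min {v | v ∈ M ∧ v ≤ u} ⟨u, hu, le_rfl⟩
  refine ⟨g, ⟨hgM, fun v hv hvg => ?_⟩, hgu⟩
  by_contra hne
  exact hmin v ⟨hv, hvg.trans hgu⟩ (lt_of_le_of_ne hvg hne)

lemma setOf_minGen_finite (M : Set (Fin n →₀ ℕ)) : {g | MinGen M g}.Finite :=
  IsAntichain.finite_of_partiallyWellOrderedOn (r := (· ≤ ·))
    (fun _ ha _ hb hne hle => hne (hb.2 _ ha.1 hle)) (Set.isPWO_of_wellQuasiOrderedLE _)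

lemma mdeg_le_idealDeg {M : Set (Fin n →₀ ℕ)} {g : Fin n →₀ ℕ} (hg : MinGen M g) :
    mdeg g ≤ idealDeg M :=
  le_csSup ((setOf_minGen_finite M).image mdeg).bddAbove ⟨g, hg, rfl⟩

lemma exists_mem_le_mdeg_le {M : Set (Fin n →₀ ℕ)} {e : ℕ} (he : idealDeg M ≤ e)
    {u : Fin n →₀ ℕ} (hu : u ∈ M) : ∃ g ∈ M, g ≤ u ∧ mdeg g ≤ e := by
  obtain ⟨g, hg, hgu⟩ := exists_minGen_le hu
  exact ⟨g, hg.1, hgu, (mdeg_le_idealDeg hg).trans he⟩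

lemma prodSet_geSet_subset (M N : Set (Fin n →₀ ℕ)) (e f : ℕ) :
    prodSet (geSet M e) (geSet N f) ⊆ geSet (prodSet M N) (e + f) := by
  rintro _ ⟨a, ⟨u, hu, hue, hua⟩, b, ⟨v, hv, hvf, hvb⟩, rfl⟩
  exact ⟨u + v, ⟨u, hu, v, hv, rfl⟩, by rw [mdeg_add]; omega, add_le_add hua hvb⟩

lemma geSet_prodSet_subset {M N : Set (Fin n →₀ ℕ)} (hM : MonIdeal M) (hN : MonIdeal N)
    {e f : ℕ} (he : idealDeg M ≤ e) (hf : idealDeg N ≤ f) :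
    geSet (prodSet M N) (e + f) ⊆ prodSet (geSet M e) (geSet N f) := by
  rintro w ⟨_, ⟨u, hu, v, hv, rfl⟩, hdeg, huvw⟩
  obtain ⟨g, hgM, hgu, hge⟩ := exists_mem_le_mdeg_le he hu
  obtain ⟨h, hhN, hhv, hhf⟩ := exists_mem_le_mdeg_le hf hv
  obtain ⟨r, rfl⟩ := exists_add_of_le ((add_le_add hgu hhv).trans huvw)
  have hw := (mdeg_mono huvw).trans' hdeg
  rw [mdeg_add, mdeg_add] at hw
  obtain ⟨s, t, rfl, hs⟩ := exists_add_eq_of_le_mdeg (d := e - mdeg g) (r := r) (by omega)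
  refine ⟨g + s, ⟨g + s, hM g hgM s, ?_, le_rfl⟩, h + t, ⟨h + t, hN h hhN t, ?_, le_rfl⟩,
    by abel⟩ <;> simp only [mdeg_add] at hw ⊢ <;> omega

lemma geSet_prodSet {M N : Set (Fin n →₀ ℕ)} (hM : MonIdeal M) (hN : MonIdeal N)
    {e f : ℕ} (he : idealDeg M ≤ e) (hf : idealDeg N ≤ f) :
    geSet (prodSet M N) (e + f) = prodSet (geSet M e) (geSet N f) :=
  (geSet_prodSet_subset hM hN he hf).antisymm (prodSet_geSet_subset M N e f)

lemma IsMaxVar.of_add_left {a b : Fin n →₀ ℕ} {i : Fin n} (h : IsMaxVar (a + b) i)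
    (ha : a i ≠ 0) : IsMaxVar a i :=
  ⟨ha, fun k hk => (Nat.add_eq_zero_iff.1 (h.2 k hk)).1⟩

lemma IsMaxVar.of_add_right {a b : Fin n →₀ ℕ} {i : Fin n} (h : IsMaxVar (a + b) i)
    (hb : b i ≠ 0) : IsMaxVar b i :=
  (add_comm a b ▸ h).of_add_left hb

lemma single_add_update_add {a : Fin n →₀ ℕ} {i : Fin n} (ha : a i ≠ 0) (b : Fin n →₀ ℕ)
    (j : Fin n) :
    Finsupp.single j 1 + Finsupp.update (a + b) i ((a + b) i - 1) =
      Finsupp.single j 1 + Finsupp.update a i (a i - 1) + b := by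
  ext k
  simp only [Finsupp.add_apply, Finsupp.update_apply]
  split_ifs with hk
  · subst hk; omega
  · omega

lemma StableProp.prodSet {A B : Set (Fin n →₀ ℕ)} (hA : StableProp A) (hB : StableProp B) :
    StableProp (prodSet A B) := by
  rintro _ ⟨a, ha, b, hb, rfl⟩ i hi j hji
  by_cases hai : a i = 0
  · have hbi : b i ≠ 0 := by simpa [hai] using hi.1
    refine ⟨a, ha, _, hB b hb i (hi.of_add_right hbi) j hji, ?_⟩
    rw [add_comm a b, single_add_update_add hbi, add_comm]
  · exact ⟨_, hA a ha i (hi.of_add_left hai) j hji, b, hb, single_add_update_add hai b j⟩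

end MonomialIdeals

/-- if `I_{≥e}` and `J_{≥f}` are stable (`e ≥ deg I`, `f ≥ deg J`),
then `(I·J)_{≥ e+f}` is stable. -/
theorem statement9 {n : ℕ} (M N : Set (Fin n →₀ ℕ))
    (hM : MonIdeal M) (hN : MonIdeal N)
    (e f : ℕ) (he : idealDeg M ≤ e) (hf : idealDeg N ≤ f)
    (hse : StableProp (geSet M e)) (hsf : StableProp (geSet N f)) :
    StableProp (geSet (prodSet M N) (e + f)) := by
  rw [geSet_prodSet hM hN he hf]
  exact hse.prodSet hsf
end

section
/- Let I ⊂ S be a monomial ideal of Borel type, q = max{ j : x_j ∈ √I }, and for each i ≥ 1 write the minimal generators u of I with m(u) = q+i as u = v · x_{q+i}^{a} with v ∈ K[x_1,...,x_{q+i-1}] and a > 0. Then for any i ≥ 2 and any minimal generator v·x_{q+i}^{a} of I with m supported at q+i, there exists a minimal generator v'·x_{q+i-1}^{a'} of I (with m(v'·x_{q+i-1}^{a'}) = q+i-1) such that v' divides v. -/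
lemma exists_minGen {n : ℕ} (M : Set (Fin n →₀ ℕ)) :
    ∀ d : ℕ, ∀ z ∈ M, mdeg z ≤ d → ∃ w, MinGen M w ∧ w ≤ z := by
  intro d
  induction d with
  | zero =>
    intro z hz hdz
    refine ⟨z, ⟨hz, fun v hv hvz => ?_⟩, le_refl z⟩
    have hz0 : ∀ k, z k = 0 := by
      intro k
      have := Finset.sum_eq_zero_iff.mp (Nat.le_zero.mp hdz) k (Finset.mem_univ k)
      exact this
    refine le_antisymm hvz (Finsupp.le_def.mpr fun k => ?_)
    simp [hz0 k]
  | succ d ih =>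
    intro z hz hdz
    by_cases h : ∀ v ∈ M, v ≤ z → v = z
    · exact ⟨z, ⟨hz, h⟩, le_refl z⟩
    · push_neg at h
      obtain ⟨v, hv, hvz, hne⟩ := h
      have hlt : mdeg v < mdeg z := by
        obtain ⟨k, hk⟩ : ∃ k, v k ≠ z k := by
          by_contra hc
          push_neg at hc
          exact hne (Finsupp.ext hc)
        refine Finset.sum_lt_sum (fun j _ => Finsupp.le_def.mp hvz j) ⟨k, Finset.mem_univ k, ?_⟩
        exact lt_of_le_of_ne (Finsupp.le_def.mp hvz k) hk
      obtain ⟨w, hw, hwv⟩ := ih v hv (by omega)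
      exact ⟨w, hw, hwv.trans hvz⟩

/-- with `q = max{j : x_j ∈ √I}`, for `i ≥ 2` and a minimal generator
`u = v · x_{q+i}^a` (so `m(u)` is at 0-index `q.val + i`), there is a minimal
generator `w = v' · x_{q+i-1}^{a'}` with `v' ∣ v`. -/
theorem statement14 {n : ℕ} (M : Set (Fin n →₀ ℕ))
    (hM : MonIdeal M) (hB : BorelProp M) (q : Fin n) (hq : IsQ M q)
    (i : ℕ) (hi2 : 2 ≤ i) (hi : (q : ℕ) + i < n)
    (u : Fin n →₀ ℕ) (hu : MinGen M u) (hmu : IsMaxVar u ⟨(q : ℕ) + i, hi⟩) :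
    ∃ w : Fin n →₀ ℕ, MinGen M w ∧ IsMaxVar w ⟨(q : ℕ) + i - 1, by omega⟩ ∧
      Finsupp.update w ⟨(q : ℕ) + i - 1, by omega⟩ 0 ≤
        Finsupp.update u ⟨(q : ℕ) + i, hi⟩ 0 := by
  set p : Fin n := ⟨(q : ℕ) + i, hi⟩ with hp
  set p' : Fin n := ⟨(q : ℕ) + i - 1, by omega⟩ with hp'
  have hpp' : p' < p := by
    simp only [Fin.lt_def, hp, hp']
    omega
  have hne : p' ≠ p := ne_of_lt hpp'
  obtain ⟨t, ht, hzM⟩ := hB u hu.1 p p' hpp' hmu.1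
  set z := Finsupp.single p' t + Finsupp.update u p 0 with hzdef
  obtain ⟨w, hw, hwz⟩ := exists_minGen M (mdeg z) z hzM le_rfl
  have hwle : ∀ k, w k ≤ z k := Finsupp.le_def.mp hwz
  have hzk : ∀ k, k ≠ p' → z k = (Finsupp.update u p 0) k := by
    intro k hk
    simp [hzdef, Finsupp.single_apply, Ne.symm hk]
  have hpval : (p : ℕ) = (q : ℕ) + i := rfl
  have hp'val : (p' : ℕ) = (q : ℕ) + i - 1 := rfl
  have hupd : ∀ k, (Finsupp.update u p 0) k = if k = p then 0 else u k := by
    intro k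
    simp [Finsupp.coe_update, Function.update_apply]
  -- z vanishes above p'
  have hzhigh : ∀ k : Fin n, p' < k → z k = 0 := by
    intro k hk
    rw [hzk k (ne_of_gt hk), hupd k]
    by_cases hkp : k = p
    · simp [hkp]
    · simp only [hkp, if_false]
      apply hmu.2
      have hv : (k : ℕ) ≠ (q : ℕ) + i := fun h => hkp (Fin.ext h)
      rw [Fin.lt_def, hpval]
      rw [Fin.lt_def, hp'val] at hk
      omega
  -- w p' ≠ 0
  have hwp' : w p' ≠ 0 := by
    intro h0
    have hwu : w ≤ u := by
      refine Finsupp.le_def.mpr fun k => ?_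
      by_cases hk : k = p'
      · simp [hk, h0]
      · have := hwle k
        rw [hzk k hk, hupd k] at this
        by_cases hkp : k = p
        · subst hkp; simp at this; omega
        · simpa [hkp] using this
    have := hu.2 w hw.1 hwu
    have hwp : w p ≤ z p := hwle p
    rw [hzhigh p hpp'] at hwp
    rw [this] at hwp
    exact hmu.1 (Nat.le_zero.mp hwp)
  refine ⟨w, hw, ⟨hwp', fun k hk => ?_⟩, ?_⟩
  · have := hwle k
    rw [hzhigh k hk] at this
    omega
  · refine Finsupp.le_def.mpr fun k => ?_
    by_cases hk : k = p'
    · simp [hk, Finsupp.coe_update, Function.update_apply]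
    · rw [Finsupp.coe_update, Finsupp.coe_update]
      rw [Function.update_apply, Function.update_apply]
      simp only [hk, if_false]
      have := hwle k
      rw [hzk k hk, hupd k] at this
      by_cases hkp : k = p
      · subst hkp; simp at this ⊢; omega
      · simpa [hkp] using this
end

section
/- Suppose a monomial ideal I ⊂ S has minimal generating set G(I) = {x_1^{a_1},...,x_q^{a_q}, v_{01},...,v_{0r_0}, v_{11}x_{q+1}^{a_{11}},..., v_{n-q,r_{n-q}}x_n^{a_{n-q,r_{n-q}}}} where a_j > 0, v_{0j} ∈ K[x_1,...,x_q], v_{ij} ∈ K[x_1,...,x_{q+i-1}], a_{ij} > 0, and for every 2 ≤ i ≤ n−q and 1 ≤ j ≤ r_i there exists 1 ≤ k ≤ r_{i-1} with v_{i-1,k} | v_{ij}. Then I is an ideal of Borel type. -/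
/-!
Borel type can be tested on generators: a generator `g` with `x_i ∤ g` still divides
`u / x_i^{ν_i(u)}` for every multiple `u` of `g`, and for `x_i ∣ g` it suffices to find a generator
dividing `x_j^t · g / x_i^{ν_i(g)}`. For `j ≤ q` the power `x_j^{a_j}` is such a generator. For
`j > q` only the generators `v_{lk} x_{q+l}^{b_{lk}}` with `q + l ≥ i > j` can involve `x_i`;
following the divisibility chain down to level `l' = j - q` (1-based indices) gives
`v_{l'k'} ∣ v_{lk}` with `v_{l'k'}` free of `x_i`, and then `v_{l'k'} x_j^{b_{l'k'}}` is the required generator.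
-/

namespace Finsupp

variable {ι M : Type*} [Zero M] [Preorder M]

theorem update_le_update {u w : ι →₀ M} (h : u ≤ w) (i : ι) (c : M) :
    u.update i c ≤ w.update i c := by
  classical
  intro k
  simp only [coe_update, Function.update_apply]
  split_ifs
  · exact le_rfl
  · exact h k

theorem le_update_zero {g u : ι →₀ M} (h : g ≤ u) {i : ι} (hg : g i = 0) :
    g ≤ u.update i 0 := by
  classical
  intro k
  simp only [coe_update, Function.update_apply]
  split_ifs with hk
  · exact (hk ▸ hg).le
  · exact h k

end Finsupp

theorem exists_le_of_chain {α : Type*} [Preorder α] (r : ℕ → ℕ) (v : ℕ → ℕ → α) (N : ℕ)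
    (hchain : ∀ i, 2 ≤ i → i ≤ N → ∀ j < r i, ∃ k < r (i - 1), v (i - 1) k ≤ v i j)
    {i' i : ℕ} (hi' : 1 ≤ i') (hi'i : i' ≤ i) (hiN : i ≤ N) :
    ∀ j < r i, ∃ k < r i', v i' k ≤ v i j := by
  induction i, hi'i using Nat.le_induction with
  | base => exact fun j hj => ⟨j, hj, le_rfl⟩
  | succ i hi ih =>
    intro j hj
    obtain ⟨k, hk, hkj⟩ := hchain (i + 1) (by omega) hiN j hj
    obtain ⟨k', hk', hk'k⟩ := ih (by omega) k hk
    exact ⟨k', hk', hk'k.trans hkj⟩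

theorem borelProp_upperClosure {n : ℕ} (G : Set (Fin n →₀ ℕ))
    (hG : ∀ g ∈ G, ∀ i j : Fin n, j < i → g i ≠ 0 →
      ∃ t : ℕ, 0 < t ∧ Finsupp.single j t + g.update i 0 ∈ upperClosure G) :
    BorelProp (upperClosure G : Set (Fin n →₀ ℕ)) := by
  rintro u hu i j hji -
  obtain ⟨g, hgG, hgu⟩ := mem_upperClosure.1 hu
  by_cases hgi : g i = 0
  · exact ⟨1, one_pos, (upperClosure G).upper
      ((Finsupp.le_update_zero hgu hgi).trans le_add_self) (subset_upperClosure hgG)⟩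
  · obtain ⟨t, ht, hmem⟩ := hG g hgG i j hji hgi
    exact ⟨t, ht, (upperClosure G).upper
      (add_le_add_right (Finsupp.update_le_update hgu i 0) _) hmem⟩

theorem exists_generator_le_single_add_update {n q : ℕ} {r : ℕ → ℕ} {v : ℕ → ℕ → (Fin n →₀ ℕ)}
    {b : ℕ → ℕ → ℕ}
    (hvi : ∀ i, 1 ≤ i → i ≤ n - q → ∀ j < r i,
      ∀ k : Fin n, (v i j) k ≠ 0 → (k : ℕ) < q + i - 1)
    (hchain : ∀ i, 2 ≤ i → i ≤ n - q → ∀ j < r i,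
      ∃ k < r (i - 1), v (i - 1) k ≤ v i j)
    {l k : ℕ} (hl1 : 1 ≤ l) (hln : l ≤ n - q) (hk : k < r l) (hql : q + l - 1 < n)
    {i j : Fin n} (hqj : q ≤ (j : ℕ)) (hji : j < i)
    (hgi : (v l k + Finsupp.single (⟨q + l - 1, hql⟩ : Fin n) (b l k)) i ≠ 0) :
    ∃ l', 1 ≤ l' ∧ l' ≤ n - q ∧ ∃ k' < r l', ∃ hql' : q + l' - 1 < n,
      v l' k' + Finsupp.single (⟨q + l' - 1, hql'⟩ : Fin n) (b l' k') ≤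
        Finsupp.single j (b l' k') +
          (v l k + Finsupp.single (⟨q + l - 1, hql⟩ : Fin n) (b l k)).update i 0 := by
  have hil : (i : ℕ) ≤ q + l - 1 := by
    by_cases hvl : v l k i = 0
    · rw [Finsupp.add_apply, hvl, zero_add, Finsupp.single_apply_ne_zero] at hgi
      exact (congrArg Fin.val hgi.1).le
    · exact (hvi l hl1 hln k hk i hvl).le
  have hji' : (j : ℕ) < i := hji
  obtain ⟨k', hk', hk'k⟩ := exists_le_of_chain r v (n - q) hchain (i' := j - q + 1) (by omega)
    (by omega : j - q + 1 ≤ l) hln k hk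
  have hjn : q + (j - q + 1) - 1 = j := by omega
  have hvi' : v (j - q + 1) k' i = 0 := by
    by_contra h
    have := hvi _ (by omega) (by omega) k' hk' i h
    omega
  refine ⟨j - q + 1, by omega, by omega, k', hk', by omega, ?_⟩
  have hj : (⟨q + (j - q + 1) - 1, by omega⟩ : Fin n) = j := Fin.ext hjn
  rw [hj, add_comm]
  exact add_le_add_right (Finsupp.le_update_zero (hk'k.trans le_self_add) hvi') _

theorem statement15_general {n : ℕ} (M : Set (Fin n →₀ ℕ))
    (q : ℕ)
    (a : ℕ → ℕ) (ha : ∀ j < q, 0 < a j)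
    (r : ℕ → ℕ) (v : ℕ → ℕ → (Fin n →₀ ℕ)) (b : ℕ → ℕ → ℕ)
    (hv0 : ∀ j < r 0, ∀ k : Fin n, (v 0 j) k ≠ 0 → (k : ℕ) < q)
    (hvi : ∀ i, 1 ≤ i → i ≤ n - q → ∀ j < r i,
      ∀ k : Fin n, (v i j) k ≠ 0 → (k : ℕ) < q + i - 1)
    (hb : ∀ i, 1 ≤ i → i ≤ n - q → ∀ j < r i, 0 < b i j)
    (hchain : ∀ i, 2 ≤ i → i ≤ n - q → ∀ j < r i,
      ∃ k < r (i - 1), v (i - 1) k ≤ v i j)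
    (hMdef : M = {w : Fin n →₀ ℕ |
      (∃ j : Fin n, (j : ℕ) < q ∧ Finsupp.single j (a (j : ℕ)) ≤ w) ∨
      (∃ j < r 0, v 0 j ≤ w) ∨
      (∃ i, 1 ≤ i ∧ i ≤ n - q ∧ ∃ j < r i, ∃ hqi : q + i - 1 < n,
        v i j + Finsupp.single ⟨q + i - 1, hqi⟩ (b i j) ≤ w)}) :
    BorelProp M := by
  have hM : M = upperClosure {g |
      (∃ j : Fin n, (j : ℕ) < q ∧ g = Finsupp.single j (a (j : ℕ))) ∨
      (∃ j < r 0, g = v 0 j) ∨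
      (∃ i, 1 ≤ i ∧ i ≤ n - q ∧ ∃ j < r i, ∃ hqi : q + i - 1 < n,
        g = v i j + Finsupp.single ⟨q + i - 1, hqi⟩ (b i j))} := by
    ext w
    simp only [hMdef, SetLike.mem_coe, mem_upperClosure]
    constructor
    · rintro (⟨j, hj, h⟩ | ⟨j, hj, h⟩ | ⟨i, hi1, hin, j, hj, hqi, h⟩)
      exacts [⟨_, Or.inl ⟨j, hj, rfl⟩, h⟩, ⟨_, Or.inr (Or.inl ⟨j, hj, rfl⟩), h⟩,
        ⟨_, Or.inr (Or.inr ⟨i, hi1, hin, j, hj, hqi, rfl⟩), h⟩]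
    · rintro ⟨g, ⟨j, hj, rfl⟩ | ⟨j, hj, rfl⟩ | ⟨i, hi1, hin, j, hj, hqi, rfl⟩, h⟩
      exacts [Or.inl ⟨j, hj, h⟩, Or.inr (Or.inl ⟨j, hj, h⟩),
        Or.inr (Or.inr ⟨i, hi1, hin, j, hj, hqi, h⟩)]
  rw [hM]
  refine borelProp_upperClosure _ ?_
  rintro g hg i j hji hgi
  by_cases hjq : (j : ℕ) < q
  · exact ⟨a j, ha j hjq, (upperClosure _).upper le_self_add
      (subset_upperClosure (Or.inl ⟨j, hjq, rfl⟩))⟩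
  have hqi_lt : q < (i : ℕ) := by omega
  rcases hg with ⟨k, hk, rfl⟩ | ⟨k, hk, rfl⟩ | ⟨l, hl1, hln, k, hk, hql, rfl⟩
  · exact absurd (Finsupp.single_apply_ne_zero.1 hgi).1 (by omega)
  · exact absurd (hv0 k hk i hgi) (by omega)
  · obtain ⟨l', hl'1, hl'n, k', hk', hql', hle⟩ :=
      exists_generator_le_single_add_update hvi hchain hl1 hln hk hql (by omega) hji hgi
    refine ⟨b l' k', hb l' hl'1 hl'n k' hk', (upperClosure _).upper hle (subset_upperClosure ?_)⟩
    exact Or.inr (Or.inr ⟨l', hl'1, hl'n, k', hk', hql', rfl⟩)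

/-- a monomial ideal generated by
`x_1^{a_1},…,x_q^{a_q}`, monomials `v_{0j} ∈ K[x_1,…,x_q]`, and monomials
`v_{ij} x_{q+i}^{a_{ij}}` with `v_{ij} ∈ K[x_1,…,x_{q+i-1}]` (`1 ≤ i ≤ n-q`),
such that each `v_{ij}` (`i ≥ 2`) is divisible by some `v_{i-1,k}`, is of Borel type.
(0-indexed: the variable `x_s` of the paper is index `s - 1`.) -/
theorem statement15 {n : ℕ} (M : Set (Fin n →₀ ℕ))
    (q : ℕ) (hq1 : 1 ≤ q) (hqn : q ≤ n)
    (a : ℕ → ℕ) (ha : ∀ j < q, 0 < a j)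
    (r : ℕ → ℕ) (v : ℕ → ℕ → (Fin n →₀ ℕ)) (b : ℕ → ℕ → ℕ)
    (hv0 : ∀ j < r 0, ∀ k : Fin n, (v 0 j) k ≠ 0 → (k : ℕ) < q)
    (hvi : ∀ i, 1 ≤ i → i ≤ n - q → ∀ j < r i,
      ∀ k : Fin n, (v i j) k ≠ 0 → (k : ℕ) < q + i - 1)
    (hb : ∀ i, 1 ≤ i → i ≤ n - q → ∀ j < r i, 0 < b i j)
    (hchain : ∀ i, 2 ≤ i → i ≤ n - q → ∀ j < r i,
      ∃ k < r (i - 1), v (i - 1) k ≤ v i j)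
    (hMdef : M = {w : Fin n →₀ ℕ |
      (∃ j : Fin n, (j : ℕ) < q ∧ Finsupp.single j (a (j : ℕ)) ≤ w) ∨
      (∃ j < r 0, v 0 j ≤ w) ∨
      (∃ i, 1 ≤ i ∧ i ≤ n - q ∧ ∃ j < r i, ∃ hqi : q + i - 1 < n,
        v i j + Finsupp.single ⟨q + i - 1, hqi⟩ (b i j) ≤ w)}) :
    BorelProp M :=
  statement15_general M q a ha r v b hv0 hvi hb hchain hMdef
end

section
/- Let I ⊂ S be a monomial ideal and e ≥ deg(I) an integer such that I_{≥ e} is stable. Then for every monomial u ∈ I, every j < m(u), and every integer t' > 0 with deg(x_j^{t'} u) ≥ e, one has x_j^{t' + ν_{m(u)}(u)} · u / x_{m(u)}^{ν_{m(u)}(u)} ∈ I. -/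

lemma statement17.key {n : ℕ} (N : Set (Fin n →₀ ℕ)) (hst : StableProp N)
    (i j : Fin n) (hj : j < i) :
    ∀ k : ℕ, ∀ w ∈ N, w i = k → (∀ k' : Fin n, i < k' → w k' = 0) →
      Finsupp.single j k + Finsupp.update w i 0 ∈ N := by
  intro k
  induction k with
  | zero =>
    intro w hw h0 _
    have : Finsupp.update w i 0 = w := by
      rw [← h0]; exact Finsupp.update_self w i
    simpa [this] using hw
  | succ k ih =>
    intro w hw hk htop
    have hji : j ≠ i := ne_of_lt hj
    have hmax : IsMaxVar w i := ⟨by rw [hk]; simp, htop⟩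
    have h1 := hst w hw i hmax j hj
    set w' := Finsupp.single j 1 + Finsupp.update w i (w i - 1) with hw'
    have hwi : w' i = k := by
      simp [hw', Finsupp.single_apply, hji, hk]
    have htop' : ∀ k' : Fin n, i < k' → w' k' = 0 := by
      intro k' hk'
      have : j ≠ k' := ne_of_lt (lt_trans hj hk')
      simp [hw', Finsupp.single_apply, this, Finsupp.coe_update, Function.update_apply,
        (ne_of_lt hk').symm, htop k' hk']
    have h2 := ih w' h1 hwi htop'
    have heq : Finsupp.single j k + Finsupp.update w' i 0
        = Finsupp.single j (k + 1) + Finsupp.update w i 0 := by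
      ext a
      by_cases hai : a = i
      · subst hai
        simp [Finsupp.single_apply, hji]
      · by_cases haj : a = j
        · subst haj
          simp [hw', Finsupp.coe_update, Function.update_apply, hai, Finsupp.single_apply]
          omega
        · simp [hw', Finsupp.coe_update, Function.update_apply, hai, Finsupp.single_apply,
            Ne.symm haj]
    rw [← heq]
    exact h2

/-- if `I_{≥e}` is stable (`e ≥ deg I`), then for every monomial
`u ∈ I`, `j < m(u)` and `t' > 0` with `deg(x_j^{t'} u) ≥ e`, one has
`x_j^{t' + ν_{m(u)}(u)} · u / x_{m(u)}^{ν_{m(u)}(u)} ∈ I`. -/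
theorem statement17 {n : ℕ} (M : Set (Fin n →₀ ℕ)) (hM : MonIdeal M)
    (e : ℕ) (he : idealDeg M ≤ e) (hst : StableProp (geSet M e)) :
    ∀ u ∈ M, ∀ i : Fin n, IsMaxVar u i → ∀ j : Fin n, j < i →
      ∀ t' : ℕ, 0 < t' → e ≤ t' + mdeg u →
        Finsupp.single j (t' + u i) + Finsupp.update u i 0 ∈ M := by
  intro u hu i hi j hj t' ht' hdeg
  have hji : j ≠ i := ne_of_lt hj
  set w := Finsupp.single j t' + u with hwdef
  have hwM : w ∈ M := by
    have := hM u hu (Finsupp.single j t')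
    rwa [add_comm] at this
  have hmdeg : mdeg w = t' + mdeg u := by
    simp [hwdef, mdeg, Finsupp.add_apply, Finsupp.single_apply,
      Finset.sum_add_distrib]
  have hwge : w ∈ geSet M e := ⟨w, hwM, by rw [hmdeg]; exact hdeg, le_refl w⟩
  have hwi : w i = u i := by
    simp [hwdef, Finsupp.single_apply, hji]
  have htop : ∀ k' : Fin n, i < k' → w k' = 0 := by
    intro k' hk'
    have : j ≠ k' := ne_of_lt (lt_trans hj hk')
    simp [hwdef, Finsupp.single_apply, this, hi.2 k' hk']
  have hkey := statement17.key (geSet M e) hst i j hj (u i) w hwge hwi htop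
  have heq : Finsupp.single j (u i) + Finsupp.update w i 0
      = Finsupp.single j (t' + u i) + Finsupp.update u i 0 := by
    ext a
    by_cases hai : a = i
    · subst hai; simp [Finsupp.single_apply, hji]
    · simp [hwdef, Finsupp.coe_update, Function.update_apply, hai, Finsupp.single_apply]
      by_cases haj : a = j
      · simp [haj]; omega
      · omega
  rw [heq] at hkey
  obtain ⟨v, hv, _, hle⟩ := hkey
  obtain ⟨c, hc⟩ := exists_add_of_le hle
  rw [hc]
  exact hM v hv c
end
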